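/- arXiv:math/0111022 — 2 statements merged into one kernel-verified Lean document; each statement's English description precedes it below -/
import Mathlib

section
/- For real q with 0 < q < 1 and |z| < 1, (1-q)^n · Li_n(z;q) converges to Li_n(z) = Σ_{k≥1} z^k/k^n as q → 1⁻, where Li_n(z;q) = Σ_{k≥1} z^k/(1-q^k)^n. -/
/-- The q-deformed polylogarithm with real parameter `q`. -/
noncomputable def qLi (n : ℕ) (z : ℂ) (q : ℝ) : ℂ :=
  ∑' k : ℕ+, z ^ (k : ℕ) / (1 - (q : ℂ) ^ (k : ℕ)) ^ n

/-- The classical polylogarithm `Li_n(z) = Σ_{k≥1} z^k/k^n`. -/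
noncomputable def Li (n : ℕ) (z : ℂ) : ℂ :=
  ∑' k : ℕ+, z ^ (k : ℕ) / ((k : ℂ)) ^ n

/-!
The `k`-th term of `(1 - q)^n Li_n(z; q)` is `z^k r_k(q)^n` with
`r_k(q) = (1 - q)/(1 - q^k) = 1/(1 + q + ⋯ + q^(k-1))`. Each `r_k(q)` tends to `1/k`
as `q → 1`, and `0 ≤ r_k(q) ≤ 1` for `0 ≤ q < 1`, so the terms are dominated by the summable
`‖z‖^k` and dominated convergence for series gives the limit.
-/

open Filter Topology Finset

theorem one_sub_div_one_sub_pow_eq_inv_geom_sum {K : Type*} [Field K] {x : K} (hx : x ≠ 1)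
    (k : ℕ) : (1 - x) / (1 - x ^ k) = (∑ i ∈ range k, x ^ i)⁻¹ := by
  rw [← mul_neg_geom_sum, div_mul_cancel_left₀ (sub_ne_zero.mpr hx.symm)]

theorem tendsto_one_sub_div_one_sub_pow {𝕜 : Type*} [NormedField 𝕜] [CharZero 𝕜] {k : ℕ}
    (hk : k ≠ 0) :
    Tendsto (fun x : 𝕜 => (1 - x) / (1 - x ^ k)) (𝓝[≠] 1) (𝓝 (k : 𝕜)⁻¹) := by
  have hgeom : Tendsto (fun x : 𝕜 => ∑ i ∈ range k, x ^ i) (𝓝[≠] 1) (𝓝 (k : 𝕜)) := by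
    have hcont : Continuous (fun x : 𝕜 => ∑ i ∈ range k, x ^ i) := by fun_prop
    simpa using (hcont.tendsto 1).mono_left nhdsWithin_le_nhds
  refine (hgeom.inv₀ (Nat.cast_ne_zero.mpr hk)).congr' ?_
  filter_upwards [self_mem_nhdsWithin] with x hx
  exact (one_sub_div_one_sub_pow_eq_inv_geom_sum hx k).symm

theorem one_sub_div_one_sub_pow_nonneg {q : ℝ} (h0 : 0 ≤ q) (h1 : q ≤ 1) (k : ℕ) :
    0 ≤ (1 - q) / (1 - q ^ k) :=
  div_nonneg (by linarith) (by linarith [pow_le_one₀ h0 h1 (n := k)])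

theorem one_sub_div_one_sub_pow_le_one {q : ℝ} (h0 : 0 ≤ q) (h1 : q ≤ 1) {k : ℕ}
    (hk : k ≠ 0) : (1 - q) / (1 - q ^ k) ≤ 1 := by
  have hqk : q ^ k ≤ q := pow_le_of_le_one h0 h1 hk
  exact div_le_one_of_le₀ (by linarith) (by linarith)

theorem qLi_tendsto_Li_general (n : ℕ) (z : ℂ) (hz : ‖z‖ < 1) :
    Filter.Tendsto (fun q : ℝ => ((1 - q : ℂ)) ^ n * qLi n z q)
      (nhdsWithin 1 (Set.Ioo 0 1)) (nhds (Li n z)) := by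
  have hterms : ∀ q : ℝ, ((1 - q : ℂ)) ^ n * qLi n z q =
      ∑' k : ℕ+, z ^ (k : ℕ) * (((1 - q) / (1 - q ^ (k : ℕ)) : ℝ) : ℂ) ^ n := by
    intro q
    rw [qLi, ← tsum_mul_left]
    congr 1 with k
    push_cast
    rw [div_pow]
    ring
  simp_rw [hterms]
  refine tendsto_tsum_of_dominated_convergence (bound := fun k : ℕ+ => ‖z‖ ^ (k : ℕ))
    ((summable_geometric_of_lt_one (norm_nonneg z) hz).comp_injective PNat.coe_injective)
    (fun k => ?_) ?_
  · have hIoo : 𝓝[Set.Ioo 0 1] (1 : ℝ) ≤ 𝓝[≠] 1 :=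
      nhdsWithin_mono _ fun q hq => hq.2.ne
    have hratio := (tendsto_one_sub_div_one_sub_pow k.ne_zero).mono_left hIoo
    simpa [div_eq_mul_inv] using (hratio.ofReal.pow n).const_mul (z ^ (k : ℕ))
  · filter_upwards [self_mem_nhdsWithin] with q ⟨h0, h1⟩ k
    rw [norm_mul, norm_pow, norm_pow, Complex.norm_real,
      Real.norm_of_nonneg (one_sub_div_one_sub_pow_nonneg h0.le h1.le k)]
    exact mul_le_of_le_one_right (by positivity)
      (pow_le_one₀ (one_sub_div_one_sub_pow_nonneg h0.le h1.le k)
        (one_sub_div_one_sub_pow_le_one h0.le h1.le k.ne_zero))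

theorem qLi_tendsto_Li (n : ℕ) (hn : 1 ≤ n) (z : ℂ) (hz : ‖z‖ < 1) :
    Filter.Tendsto (fun q : ℝ => ((1 - q : ℂ)) ^ n * qLi n z q)
      (nhdsWithin 1 (Set.Ioo 0 1)) (nhds (Li n z)) :=
  qLi_tendsto_Li_general n z hz
end

section
/- For 0 < q < 1, an integer n ≥ 1, and complex x with |x| < 1, the q-dilogarithm satisfies the distribution relation Li_2(x; q^n) = (1/n) Σ_{y : y^n = x} Li_2(y; q), where the sum runs over all n-th roots y of x. -/
/-!
Fix an `n`-th root `α` of `x` and a primitive `n`-th root of unity `ζ`; the `n`-th roots of `x`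
are the `ζ ^ j * α`. Summing `y ^ k` over them gives a geometric sum in `ζ ^ k`, which is `n * α ^ k`
when `n ∣ k` and `0` otherwise. Exchanging this finite sum with the absolutely convergent series
of `Li_2(y; q)` leaves only the terms `k = n * m`, which form `n * Li_2(x; q ^ n)`.
-/

/-- The q-deformed dilogarithm `Li_2(z;q) = Σ_{k≥1} z^k/(1-q^k)^2`. -/
noncomputable def qLi2 (z : ℂ) (q : ℝ) : ℂ :=
  ∑' k : ℕ+, z ^ (k : ℕ) / (1 - (q : ℂ) ^ (k : ℕ)) ^ 2

open Polynomial Finset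

lemma summable_pow_div_one_sub_pow_sq {z q : ℂ} (hz : ‖z‖ < 1) (hq : ‖q‖ < 1) :
    Summable fun k : ℕ+ => z ^ (k : ℕ) / (1 - q ^ (k : ℕ)) ^ 2 := by
  have hgeom : Summable fun k : ℕ+ => ‖z‖ ^ (k : ℕ) / (1 - ‖q‖) ^ 2 :=
    ((summable_geometric_of_lt_one (norm_nonneg z) hz).div_const _).comp_injective
      PNat.coe_injective
  refine .of_norm <| hgeom.of_nonneg_of_le (fun _ => norm_nonneg _) fun k => ?_
  have hqk : 1 - ‖q‖ ≤ ‖1 - q ^ (k : ℕ)‖ :=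
    calc 1 - ‖q‖ ≤ ‖(1 : ℂ)‖ - ‖q‖ ^ (k : ℕ) := by
          rw [norm_one]; gcongr; exact pow_le_of_le_one (norm_nonneg q) hq.le k.ne_zero
      _ ≤ ‖1 - q ^ (k : ℕ)‖ := by rw [← norm_pow]; exact norm_sub_norm_le _ _
  rw [norm_div, norm_pow, norm_pow]
  gcongr

lemma sum_qLi2_eq_tsum (s : Finset ℂ) (hs : ∀ y ∈ s, ‖y‖ < 1) {q : ℝ} (hq : |q| < 1) :
    ∑ y ∈ s, qLi2 y q = ∑' k : ℕ+, (∑ y ∈ s, y ^ (k : ℕ)) / (1 - (q : ℂ) ^ (k : ℕ)) ^ 2 := by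
  have hq' : ‖(q : ℂ)‖ < 1 := by rwa [Complex.norm_real, Real.norm_eq_abs]
  simp_rw [qLi2, Finset.sum_div]
  exact (Summable.tsum_finsetSum fun y hy => summable_pow_div_one_sub_pow_sq (hs y hy) hq').symm

lemma tsum_ite_dvd_eq_tsum_mul {M : Type*} [AddCommMonoid M] [TopologicalSpace M] (n : ℕ+)
    (f : ℕ+ → M) :
    ∑' k : ℕ+, (if (n : ℕ) ∣ k then f k else 0) = ∑' m : ℕ+, f (n * m) := by
  rw [← (mul_right_injective n).tsum_eq]
  · simp
  · intro k hk
    obtain ⟨m, hm⟩ := PNat.dvd_iff.2 (by_contra fun h => hk (if_neg h))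
    exact ⟨m, hm.symm⟩

theorem IsPrimitiveRoot.geom_sum_pow {R : Type*} [CommRing R] [IsDomain R] {n : ℕ} {ζ : R}
    (hζ : IsPrimitiveRoot ζ n) (k : ℕ) :
    ∑ j ∈ range n, (ζ ^ k) ^ j = if n ∣ k then (n : R) else 0 := by
  split_ifs with h
  · simp [(hζ.pow_eq_one_iff_dvd k).2 h]
  · have hne : ζ ^ k - 1 ≠ 0 := sub_ne_zero.2 fun h' => h ((hζ.pow_eq_one_iff_dvd k).1 h')
    have h1 : (ζ ^ k) ^ n = 1 := by rw [← pow_mul, mul_comm, pow_mul, hζ.pow_eq_one, one_pow]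
    simpa [h1, hne] using geom_sum_mul (ζ ^ k) n

theorem IsPrimitiveRoot.sum_nthRootsFinset_pow {R : Type*} [CommRing R] [IsDomain R] {n : ℕ}
    {ζ : R} (hζ : IsPrimitiveRoot ζ n) {α : R} (hα : α ≠ 0) (k : ℕ) :
    ∑ y ∈ nthRootsFinset n (α ^ n), y ^ k = if n ∣ k then n * α ^ k else 0 := by
  classical
  rw [nthRootsFinset_def, ← Multiset.toFinset_eq (hζ.nthRoots_nodup (pow_ne_zero n hα)),
    Finset.sum_mk, hζ.nthRoots_eq rfl, Multiset.map_map]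
  calc ((Multiset.range n).map ((· ^ k) ∘ (ζ ^ · * α))).sum
      = ∑ j ∈ range n, (ζ ^ k) ^ j * α ^ k := by
        simp only [Finset.sum, Finset.range_val, Function.comp_def, mul_pow, ← pow_mul, mul_comm]
    _ = _ := by rw [← Finset.sum_mul, hζ.geom_sum_pow]; split_ifs <;> simp

lemma tsum_subtype_pow_eq_sum_nthRootsFinset {R M : Type*} [CommRing R] [IsDomain R]
    [AddCommMonoid M] [TopologicalSpace M] {n : ℕ} (hn : 0 < n) (x : R) (f : R → M) :
    ∑' y : {y : R // y ^ n = x}, f y = ∑ y ∈ nthRootsFinset n x, f y := by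
  rw [← Finset.tsum_subtype]
  exact (Equiv.subtypeEquivRight fun y => (mem_nthRootsFinset hn x).symm).tsum_eq
    fun y : {y // y ∈ nthRootsFinset n x} => f y

theorem qLi2_distribution (q : ℝ) (hq0 : 0 < q) (hq1 : q < 1)
    (n : ℕ) (hn : 1 ≤ n) (x : ℂ) (hx0 : x ≠ 0) (hx : ‖x‖ < 1) :
    qLi2 x (q ^ n) = (1 / (n : ℂ)) * ∑' y : {y : ℂ // y ^ n = x}, qLi2 (y : ℂ) q := by
  lift n to ℕ+ using hn
  obtain ⟨ζ, hζ⟩ : ∃ ζ : ℂ, IsPrimitiveRoot ζ n := ⟨_, Complex.isPrimitiveRoot_exp n n.ne_zero⟩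
  obtain ⟨α, rfl⟩ : ∃ α : ℂ, α ^ (n : ℕ) = x := ⟨_, Complex.cpow_nat_inv_pow x n.ne_zero⟩
  have hα : α ≠ 0 := by rintro rfl; exact hx0 (zero_pow n.ne_zero)
  have hroots : ∀ y ∈ nthRootsFinset n (α ^ (n : ℕ)), ‖y‖ < 1 := fun y hy => by
    rw [mem_nthRootsFinset n.pos] at hy
    exact (pow_lt_one_iff_of_nonneg (norm_nonneg y) n.ne_zero).1 (by rwa [← norm_pow, hy])
  rw [tsum_subtype_pow_eq_sum_nthRootsFinset n.pos _ (qLi2 · q),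
    sum_qLi2_eq_tsum _ hroots (abs_lt.2 ⟨by linarith, hq1⟩)]
  simp_rw [hζ.sum_nthRootsFinset_pow hα, ite_div, zero_div]
  rw [tsum_ite_dvd_eq_tsum_mul]
  simp only [qLi2, Complex.ofReal_pow, PNat.mul_coe, pow_mul, mul_div_assoc]
  rw [tsum_mul_left, one_div, inv_mul_cancel_left₀ (by simp)]
end
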